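/- arXiv:2007.00256 — 2 statements merged into one kernel-verified Lean document; each statement's English description precedes it below -/
import Mathlib

section
/- Let Q(x) = (1/√(2π)) ∫_x^∞ exp(−u²/2) du. Let a > 1, ν > 0, and let C, R be real numbers with 0 < C − R < 2·√(ν·ln a). Then the sequence n ↦ Q(√(n/ν)·(C − R)) · a^(2n) tends to +∞ as n → ∞. -/
open MeasureTheory

noncomputable def gaussQ (x : ℝ) : ℝ :=
  (1 / Real.sqrt (2 * Real.pi)) * ∫ u in Set.Ioi x, Real.exp (-u ^ 2 / 2)

/-! On `[x, x + 1]` the Gaussian density is at least its value at `x + 1`, so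
`Q(x) ≥ exp(-(x + 1)² / 2) / √(2π)` for `x ≥ 0`. Along `x = √(n/ν) (C - R)` this lower bound
decays like `exp(-n (C - R)² / (2ν) + O(√n))`, while `a^(2n) = exp(2 n ln a)`; the condition
`C - R < 2 √(ν ln a)` says exactly that the exponent of the product has positive leading
coefficient in `√n`. -/

open Filter Real

lemma integrableOn_exp_neg_sq_div_two (s : Set ℝ) :
    IntegrableOn (fun u : ℝ => exp (-u ^ 2 / 2)) s := by
  have h := integrable_exp_neg_mul_sq (show (0 : ℝ) < 1 / 2 by norm_num)
  refine (h.congr (ae_of_all _ fun u => ?_)).integrableOn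
  ring_nf

lemma exp_neg_add_one_sq_div_two_le_gaussQ {x : ℝ} (hx : 0 ≤ x) :
    1 / √(2 * π) * exp (-(x + 1) ^ 2 / 2) ≤ gaussQ x := by
  have hdensity : ∀ u ∈ Set.Ioc x (x + 1), exp (-(x + 1) ^ 2 / 2) ≤ exp (-u ^ 2 / 2) := by
    rintro u ⟨hxu, hux⟩
    gcongr
    nlinarith
  calc 1 / √(2 * π) * exp (-(x + 1) ^ 2 / 2)
      = 1 / √(2 * π) * (exp (-(x + 1) ^ 2 / 2) * volume.real (Set.Ioc x (x + 1))) := by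
        simp
    _ ≤ 1 / √(2 * π) * ∫ u in Set.Ioc x (x + 1), exp (-u ^ 2 / 2) := by
        refine mul_le_mul_of_nonneg_left ?_ (by positivity)
        exact setIntegral_ge_of_const_le_real measurableSet_Ioc measure_Ioc_lt_top.ne
          hdensity (integrableOn_exp_neg_sq_div_two _)
    _ ≤ gaussQ x := by
        refine mul_le_mul_of_nonneg_left ?_ (by positivity)
        exact setIntegral_mono_set (integrableOn_exp_neg_sq_div_two _)
          (ae_of_all _ fun u => (exp_pos _).le) Set.Ioc_subset_Ioi_self.eventuallyLE

lemma tendsto_quadratic_atTop {ε : ℝ} (hε : 0 < ε) (b c : ℝ) :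
    Tendsto (fun t : ℝ => ε * t ^ 2 + b * t + c) atTop atTop := by
  have hlin : Tendsto (fun t : ℝ => ε * t + b) atTop atTop :=
    tendsto_atTop_add_const_right _ b (tendsto_id.const_mul_atTop hε)
  refine (tendsto_atTop_add_const_right _ c (tendsto_id.atTop_mul_atTop₀ hlin)).congr
    fun t => ?_
  simp only [id]
  ring

lemma tendsto_gaussQ_mul_mul_exp_mul_sq_atTop {δ κ : ℝ} (hδ : 0 ≤ δ) (hδκ : δ ^ 2 < 2 * κ) :
    Tendsto (fun t : ℝ => gaussQ (t * δ) * exp (κ * t ^ 2)) atTop atTop := by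
  have hexponent : Tendsto (fun t : ℝ => κ * t ^ 2 - (t * δ + 1) ^ 2 / 2) atTop atTop :=
    (tendsto_quadratic_atTop (by linarith : 0 < κ - δ ^ 2 / 2) (-δ) (-1 / 2)).congr
      fun t => by ring
  have hlower := (tendsto_exp_atTop.comp hexponent).const_mul_atTop
    (by positivity : 0 < 1 / √(2 * π))
  refine tendsto_atTop_mono' _ ?_ hlower
  filter_upwards [eventually_ge_atTop 0] with t ht
  calc 1 / √(2 * π) * exp (κ * t ^ 2 - (t * δ + 1) ^ 2 / 2)
      = 1 / √(2 * π) * exp (-(t * δ + 1) ^ 2 / 2) * exp (κ * t ^ 2) := by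
        rw [mul_assoc, ← exp_add]
        ring_nf
    _ ≤ gaussQ (t * δ) * exp (κ * t ^ 2) := by
        gcongr
        exact exp_neg_add_one_sq_div_two_le_gaussQ (mul_nonneg ht hδ)

theorem stmt_7 (a ν C R : ℝ) (ha : 1 < a) (hν : 0 < ν)
    (hCR0 : 0 < C - R) (hCR : C - R < 2 * Real.sqrt (ν * Real.log a)) :
    Filter.Tendsto (fun n : ℕ => gaussQ (Real.sqrt ((n : ℝ) / ν) * (C - R)) * a ^ (2 * n))
      Filter.atTop Filter.atTop := by
  have hsq : (C - R) ^ 2 < 2 * (2 * ν * log a) := by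
    have := (lt_sqrt (by positivity)).1 (show (C - R) / 2 < √(ν * log a) by linarith)
    linarith
  have hscale : Tendsto (fun n : ℕ => √((n : ℝ) / ν)) atTop atTop :=
    tendsto_sqrt_atTop.comp (tendsto_natCast_atTop_atTop.atTop_div_const hν)
  refine ((tendsto_gaussQ_mul_mul_exp_mul_sq_atTop hCR0.le hsq).comp hscale).congr fun n => ?_
  simp only [Function.comp_apply]
  rw [sq_sqrt (by positivity), ← rpow_natCast, rpow_def_of_pos (by linarith)]
  congr 2
  field_simp
  push_cast
  ring
end

section
/- Let Q(x) = (1/√(2π)) ∫_x^∞ exp(−u²/2) du. Let a > 1, ν > 0, and let C, R be real numbers with R > log₂ a and C − R > 2·√(ν·ln a). Then the sequence n ↦ Q(√(n/ν)·(C − R)) · a^(2n) + (1 − Q(√(n/ν)·(C − R))) · a^(2n) / 2^(2nR) tends to 0 as n → ∞; in particular, there exists N such that for all n ≥ N the quantity is strictly less than 1. -/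
open MeasureTheory

lemma gauss_fun_eq : (fun u : ℝ => Real.exp (-u ^ 2 / 2)) =
    fun u : ℝ => Real.exp (-(1/2) * u ^ 2) := by
  funext u; congr 1; ring

lemma gauss_integrable : Integrable (fun u : ℝ => Real.exp (-u ^ 2 / 2)) := by
  rw [gauss_fun_eq]
  exact integrable_exp_neg_mul_sq (by norm_num)

lemma gauss_integral : (∫ u : ℝ, Real.exp (-u ^ 2 / 2)) = Real.sqrt (2 * Real.pi) := by
  rw [gauss_fun_eq, integral_gaussian]
  norm_num [mul_comm]

lemma sqrt_two_pi_pos : 0 < Real.sqrt (2 * Real.pi) :=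
  Real.sqrt_pos.mpr (by positivity)

lemma gaussQ_nonneg (x : ℝ) : 0 ≤ gaussQ x := by
  apply mul_nonneg (by positivity)
  apply setIntegral_nonneg measurableSet_Ioi
  intro u _; positivity

lemma gaussQ_le_one (x : ℝ) : gaussQ x ≤ 1 := by
  have h1 : (∫ u in Set.Ioi x, Real.exp (-u ^ 2 / 2)) ≤ ∫ u : ℝ, Real.exp (-u ^ 2 / 2) := by
    apply setIntegral_le_integral gauss_integrable
    filter_upwards with u using by positivity
  rw [gauss_integral] at h1
  have := sqrt_two_pi_pos
  calc gaussQ x ≤ (1 / Real.sqrt (2 * Real.pi)) * Real.sqrt (2 * Real.pi) := by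
        unfold gaussQ
        exact mul_le_mul_of_nonneg_left h1 (by positivity)
    _ = 1 := by field_simp

lemma gaussQ_le_exp {x : ℝ} (hx : 0 ≤ x) : gaussQ x ≤ Real.exp (-x ^ 2 / 2) := by
  have key : (∫ u in Set.Ioi x, Real.exp (-u ^ 2 / 2)) ≤
      Real.exp (-x ^ 2 / 2) * Real.sqrt (2 * Real.pi) := by
    have hint : Integrable (fun u : ℝ => Real.exp (-x ^ 2 / 2) * Real.exp (-(u - x) ^ 2 / 2)) := by
      exact (gauss_integrable.comp_sub_right x).const_mul _
    have h1 : (∫ u in Set.Ioi x, Real.exp (-u ^ 2 / 2)) ≤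
        ∫ u in Set.Ioi x, Real.exp (-x ^ 2 / 2) * Real.exp (-(u - x) ^ 2 / 2) := by
      apply setIntegral_mono_on gauss_integrable.integrableOn hint.integrableOn
        measurableSet_Ioi
      intro u hu
      rw [← Real.exp_add]
      apply Real.exp_le_exp.mpr
      have hux : x ≤ u := le_of_lt hu
      nlinarith [mul_nonneg hx (sub_nonneg.mpr hux)]
    have h2 : (∫ u in Set.Ioi x, Real.exp (-x ^ 2 / 2) * Real.exp (-(u - x) ^ 2 / 2)) ≤
        ∫ u : ℝ, Real.exp (-x ^ 2 / 2) * Real.exp (-(u - x) ^ 2 / 2) := by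
      apply setIntegral_le_integral hint
      filter_upwards with u using by positivity
    have h3 : (∫ u : ℝ, Real.exp (-x ^ 2 / 2) * Real.exp (-(u - x) ^ 2 / 2)) =
        Real.exp (-x ^ 2 / 2) * Real.sqrt (2 * Real.pi) := by
      rw [integral_const_mul, integral_sub_right_eq_self (fun u : ℝ => Real.exp (-u ^ 2 / 2)) x,
        gauss_integral]
    linarith
  have := sqrt_two_pi_pos
  calc gaussQ x ≤ (1 / Real.sqrt (2 * Real.pi)) * (Real.exp (-x ^ 2 / 2) * Real.sqrt (2 * Real.pi)) := by
        unfold gaussQ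
        exact mul_le_mul_of_nonneg_left key (by positivity)
    _ = Real.exp (-x ^ 2 / 2) := by field_simp

theorem stmt_8 (a ν C R : ℝ) (ha : 1 < a) (hν : 0 < ν)
    (hR : R > Real.logb 2 a) (hCR : C - R > 2 * Real.sqrt (ν * Real.log a)) :
    Filter.Tendsto
      (fun n : ℕ =>
        gaussQ (Real.sqrt ((n : ℝ) / ν) * (C - R)) * a ^ (2 * n) +
          (1 - gaussQ (Real.sqrt ((n : ℝ) / ν) * (C - R))) * a ^ (2 * n) /
            (2 : ℝ) ^ (2 * (n : ℝ) * R))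
      Filter.atTop (nhds 0) ∧
    ∃ N : ℕ, ∀ n ≥ N,
      gaussQ (Real.sqrt ((n : ℝ) / ν) * (C - R)) * a ^ (2 * n) +
        (1 - gaussQ (Real.sqrt ((n : ℝ) / ν) * (C - R))) * a ^ (2 * n) /
          (2 : ℝ) ^ (2 * (n : ℝ) * R) < 1 := by
  have hla : 0 < Real.log a := Real.log_pos ha
  have ha0 : (0 : ℝ) < a := lt_trans one_pos ha
  set c := C - R with hc
  have hsq : 0 ≤ Real.sqrt (ν * Real.log a) := Real.sqrt_nonneg _
  have hc0 : 0 < c := lt_of_le_of_lt (by linarith) hCR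
  -- c^2 > 4 ν log a
  have hc2 : 4 * ν * Real.log a < c ^ 2 := by
    have h1 : (2 * Real.sqrt (ν * Real.log a)) ^ 2 < c ^ 2 := by
      apply pow_lt_pow_left₀ hCR (by positivity) (by norm_num)
    have h2 : Real.sqrt (ν * Real.log a) ^ 2 = ν * Real.log a :=
      Real.sq_sqrt (by positivity)
    nlinarith
  -- R log 2 > log a
  have hR2 : Real.log a < R * Real.log 2 := by
    have hl2 : 0 < Real.log 2 := Real.log_pos one_lt_two
    have : Real.logb 2 a = Real.log a / Real.log 2 := rfl
    rw [this] at hR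
    calc Real.log a = Real.log a / Real.log 2 * Real.log 2 := by field_simp
      _ < R * Real.log 2 := by exact mul_lt_mul_of_pos_right hR hl2
  set r := Real.exp (2 * Real.log a - c ^ 2 / (2 * ν)) with hr
  set s := Real.exp (2 * Real.log a - 2 * R * Real.log 2) with hs
  have hr1 : r < 1 := by
    rw [hr, Real.exp_lt_one_iff]
    rw [sub_neg]
    rw [lt_div_iff₀ (by positivity)]
    nlinarith
  have hs1 : s < 1 := by
    rw [hs, Real.exp_lt_one_iff]
    nlinarith
  have hrpos : 0 < r := Real.exp_pos _
  have hspos : 0 < s := Real.exp_pos _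
  -- key bounds
  have hbound : ∀ n : ℕ,
      gaussQ (Real.sqrt ((n : ℝ) / ν) * c) * a ^ (2 * n) +
        (1 - gaussQ (Real.sqrt ((n : ℝ) / ν) * c)) * a ^ (2 * n) /
          (2 : ℝ) ^ (2 * (n : ℝ) * R) ≤ r ^ n + s ^ n := by
    intro n
    set x := Real.sqrt ((n : ℝ) / ν) * c with hx
    have hx0 : 0 ≤ x := mul_nonneg (Real.sqrt_nonneg _) hc0.le
    have hx2 : x ^ 2 = (n : ℝ) / ν * c ^ 2 := by
      rw [hx, mul_pow, Real.sq_sqrt (by positivity)]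
    have hapow : (a : ℝ) ^ (2 * n) = Real.exp (2 * (n : ℝ) * Real.log a) := by
      rw [← Real.exp_log ha0, ← Real.exp_nat_mul]
      rw [Real.log_exp]
      push_cast
      ring
    have h2pow : (2 : ℝ) ^ (2 * (n : ℝ) * R) = Real.exp (2 * (n : ℝ) * R * Real.log 2) := by
      rw [Real.rpow_def_of_pos (by norm_num)]
      ring_nf
    have hQ0 := gaussQ_nonneg x
    have hQ1 := gaussQ_le_one x
    have hQe := gaussQ_le_exp hx0
    have h1 : gaussQ x * a ^ (2 * n) ≤ r ^ n := by
      have : gaussQ x * a ^ (2 * n) ≤ Real.exp (-x ^ 2 / 2) * a ^ (2 * n) :=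
        mul_le_mul_of_nonneg_right hQe (by positivity)
      refine le_trans this (le_of_eq ?_)
      rw [hapow, ← Real.exp_add, hr, ← Real.exp_nat_mul]
      congr 1
      rw [hx2]
      field_simp
      ring
    have h2 : (1 - gaussQ x) * a ^ (2 * n) / (2 : ℝ) ^ (2 * (n : ℝ) * R) ≤ s ^ n := by
      have hden : (0:ℝ) < (2 : ℝ) ^ (2 * (n : ℝ) * R) := by
        rw [h2pow]; exact Real.exp_pos _
      have hnum : (1 - gaussQ x) * a ^ (2 * n) ≤ a ^ (2 * n) := by
        nlinarith [pow_pos ha0 (2 * n)]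
      have hstep : (1 - gaussQ x) * a ^ (2 * n) / (2 : ℝ) ^ (2 * (n : ℝ) * R) ≤
          a ^ (2 * n) / (2 : ℝ) ^ (2 * (n : ℝ) * R) := by gcongr
      refine le_trans hstep (le_of_eq ?_)
      rw [hapow, h2pow, ← Real.exp_sub, hs, ← Real.exp_nat_mul]
      congr 1
      ring
    linarith
  have hnonneg : ∀ n : ℕ, 0 ≤
      gaussQ (Real.sqrt ((n : ℝ) / ν) * c) * a ^ (2 * n) +
        (1 - gaussQ (Real.sqrt ((n : ℝ) / ν) * c)) * a ^ (2 * n) /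
          (2 : ℝ) ^ (2 * (n : ℝ) * R) := by
    intro n
    set x := Real.sqrt ((n : ℝ) / ν) * c
    have hQ0 := gaussQ_nonneg x
    have hQ1 := gaussQ_le_one x
    have hden : (0:ℝ) < (2 : ℝ) ^ (2 * (n : ℝ) * R) := Real.rpow_pos_of_pos (by norm_num) _
    have hp := pow_pos ha0 (2 * n)
    have h1 : 0 ≤ gaussQ x * a ^ (2 * n) := mul_nonneg hQ0 hp.le
    have h2 : 0 ≤ (1 - gaussQ x) * a ^ (2 * n) / (2 : ℝ) ^ (2 * (n : ℝ) * R) :=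
      div_nonneg (mul_nonneg (by linarith) hp.le) hden.le
    linarith
  have hmaj : Filter.Tendsto (fun n : ℕ => r ^ n + s ^ n) Filter.atTop (nhds 0) := by
    have h1 := tendsto_pow_atTop_nhds_zero_of_lt_one hrpos.le hr1
    have h2 := tendsto_pow_atTop_nhds_zero_of_lt_one hspos.le hs1
    simpa using h1.add h2
  have htend : Filter.Tendsto
      (fun n : ℕ =>
        gaussQ (Real.sqrt ((n : ℝ) / ν) * c) * a ^ (2 * n) +
          (1 - gaussQ (Real.sqrt ((n : ℝ) / ν) * c)) * a ^ (2 * n) /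
            (2 : ℝ) ^ (2 * (n : ℝ) * R))
      Filter.atTop (nhds 0) := by
    exact tendsto_of_tendsto_of_tendsto_of_le_of_le tendsto_const_nhds hmaj hnonneg hbound
  refine ⟨htend, ?_⟩
  obtain ⟨N, hN⟩ := Filter.eventually_atTop.mp
    (htend.eventually (eventually_lt_nhds (by norm_num : (0:ℝ) < 1)))
  exact ⟨N, hN⟩
end
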